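/- Over the alphabet Σ = {a,b,c}, the language (a+b)* a c^+ equals the set of words w such that: ac appears as a factor of w or (ac)^2 appears as a subword of w; and there is no factorization w = x y with (ca appearing as factor of x, or (ca)^2 subword of x) and (a appearing in y); and there is no factorization w = x y with (ca appearing as factor of x, or (ca)^2 subword of x) and (b appearing in y). In symbols: (a+b)* a c^+ = ⟨ac⟩_2 ∩ (⟨c,a⟩_2)^∁ ∩ (⟨c,b⟩_2)^∁. -/

import Mathlib

/-- `u^l`: the concatenation of `l` copies of the word `u`. -/
def wpow {α : Type*} (u : List α) (l : ℕ) : List α := (List.replicate l u).flatten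

/-- Concatenation of two languages. -/
def lconc {α : Type*} (L K : Set (List α)) : Set (List α) :=
  {w | ∃ x ∈ L, ∃ y ∈ K, w = x ++ y}

/-- `⟨u⟩_l = Σ* u Σ* ∪ (u^l ⧢ Σ*)`: words containing `u` as a factor
or `u^l` as a subword. -/
def cc {α : Type*} (u : List α) (l : ℕ) : Set (List α) :=
  {w | u <:+: w ∨ (wpow u l).Sublist w}

/-- The three-letter alphabet `{a, b, c}`. -/
inductive ABC : Type
  | a | b | c
deriving DecidableEq

/-!
Both conditions `w ∉ ⟨c,a⟩_2` and `w ∉ ⟨c,b⟩_2` reduce to "no `a` and no `b` occurs after a `c`",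
i.e. `[c, a]` and `[c, b]` are not subwords of `w`. Since `[c, a]` is a subword of `(ac)^2`,
the condition `w ∈ ⟨ac⟩_2` then forces `ac` to be a factor `w = s ++ ac ++ t`; no `c` may occur in
`s` (it would precede the `a`) and only `c`s may occur in `t`, which is exactly `w ∈ (a+b)* a c^+`.
-/

open List

section Subwords

variable {α : Type*} {x y : α} {w : List α}

theorem mem_cc_singleton {l : ℕ} (hl : l ≠ 0) : w ∈ cc [x] l ↔ x ∈ w := by
  obtain ⟨l, rfl⟩ := Nat.exists_eq_succ_of_ne_zero hl
  constructor
  · rintro (h | h)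
    · exact h.subset (mem_singleton_self x)
    · exact h.subset (by simp [wpow])
  · intro h
    obtain ⟨s, t, rfl⟩ := append_of_mem h
    exact Or.inl ⟨s, t, by simp⟩

theorem pair_sublist_iff : [x, y] <+ w ↔ ∃ s t, w = s ++ t ∧ x ∈ s ∧ y ∈ t := by
  rw [cons_sublist_iff]
  simp only [singleton_sublist]

theorem mem_lconc_cc_singleton {l : ℕ} (hl : l ≠ 0) :
    w ∈ lconc (cc [x] l) (cc [y] l) ↔ [x, y] <+ w := by
  simp only [lconc, Set.mem_ofPred_eq, mem_cc_singleton hl, pair_sublist_iff]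
  constructor
  · rintro ⟨s, hs, t, ht, rfl⟩
    exact ⟨s, t, rfl, hs, ht⟩
  · rintro ⟨s, t, rfl, hs, ht⟩
    exact ⟨s, hs, t, ht, rfl⟩

theorem not_pair_sublist_append_replicate {u : List α} {m : ℕ} (hx : x ∉ u) (hy : y ≠ x) :
    ¬[x, y] <+ u ++ replicate m x := by
  rw [sublist_append_iff]
  rintro ⟨_ | ⟨z, l₁⟩, l₂, hsplit, hl₁, hl₂⟩
  · rw [nil_append] at hsplit
    subst hsplit
    exact hy (eq_of_mem_replicate (hl₂.subset (by simp)))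
  · obtain ⟨rfl, -⟩ := cons.inj (hsplit.trans cons_append)
    exact hx (hl₁.subset mem_cons_self)

end Subwords

namespace ABC

theorem forall_mem_eq_a_or_b_iff {u : List ABC} : (∀ x ∈ u, x = a ∨ x = b) ↔ c ∉ u := by
  constructor
  · intro h hc
    simpa using h c hc
  · intro h x hx
    cases x <;> simp_all

end ABC

open ABC

theorem stmt_6 :
    {w : List ABC | ∃ (u : List ABC) (m : ℕ),
        (∀ x ∈ u, x = ABC.a ∨ x = ABC.b) ∧ 1 ≤ m ∧
        w = u ++ ABC.a :: List.replicate m ABC.c} =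
      cc [ABC.a, ABC.c] 2 ∩
        (lconc (cc [ABC.c] 2) (cc [ABC.a] 2))ᶜ ∩
        (lconc (cc [ABC.c] 2) (cc [ABC.b] 2))ᶜ := by
  ext w
  simp only [Set.mem_ofPred_eq, Set.mem_inter_iff, Set.mem_compl_iff,
    mem_lconc_cc_singleton two_ne_zero, forall_mem_eq_a_or_b_iff]
  constructor
  · rintro ⟨u, m, hu, hm, rfl⟩
    obtain ⟨m, rfl⟩ := Nat.exists_eq_add_of_le' hm
    have hw : u ++ a :: replicate (m + 1) c = (u ++ [a]) ++ replicate (m + 1) c := by simp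
    have hcu : c ∉ u ++ [a] := by simpa using hu
    refine ⟨⟨Or.inl ⟨u, replicate m c, by simp [replicate_succ]⟩, ?_⟩, ?_⟩ <;> rw [hw] <;>
      exact not_pair_sublist_append_replicate hcu (by decide)
  · rintro ⟨⟨hac | hacac, hca⟩, hcb⟩
    · obtain ⟨s, t, rfl⟩ := hac
      have hs : c ∉ s := fun hc => hca (pair_sublist_iff.mpr ⟨s, a :: c :: t, by simp, hc, by simp⟩)
      have ht : ∀ y ∈ t, y = c := by
        intro y hy
        have hpair : [c, y] <+ s ++ [a, c] ++ t := pair_sublist_iff.mpr ⟨_, t, rfl, by simp, hy⟩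
        cases y
        exacts [absurd hpair hca, absurd hpair hcb, rfl]
      refine ⟨s, t.length + 1, hs, by omega, ?_⟩
      rw [replicate_succ, ← eq_replicate_of_mem ht]
      simp
    · exact absurd ((show [c, a] <+ wpow [a, c] 2 by decide).trans hacac) hca
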